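/- For all reals ε and p with 0 < ε < p² ≤ 1 there exists n₀ = n₀(ε,p) such that every (ε,p)-quasirandom graph G on n > n₀ vertices satisfies (1−3√ε)·(n/2)·log(pn) ≤ log NM(G,√ε) ≤ (1+3√ε)·(n/2)·log(pn). -/

import Mathlib

open Finset

/-- `M` (a finset of edges) is a matching of `G`: every element is an edge of `G` and distinct
elements of `M` share no endpoint. -/
def IsMatchingFinset {V : Type*} (G : SimpleGraph V) (M : Finset (Sym2 V)) : Prop :=
  (∀ e ∈ M, e ∈ G.edgeSet) ∧
    ∀ e ∈ M, ∀ f ∈ M, e ≠ f → ∀ v : V, ¬(v ∈ e ∧ v ∈ f)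

/-- `M` is a maximal matching of `G`: every edge of `G` shares an endpoint with some edge
of `M`. -/
def IsMaximalMatchingFinset {V : Type*} (G : SimpleGraph V) (M : Finset (Sym2 V)) : Prop :=
  IsMatchingFinset G M ∧ ∀ e ∈ G.edgeSet, ∃ f ∈ M, ∃ v : V, v ∈ e ∧ v ∈ f

/-- The number of vertices covered by the edges in `M`. -/
noncomputable def coveredCard {V : Type*} (M : Finset (Sym2 V)) : ℕ :=
  Set.ncard {v : V | ∃ e ∈ M, v ∈ e}

/-- `NM G ε` is the number of maximal `ε`-near perfect matchings of `G`, i.e. maximal matchings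
covering at least `(1-ε)|V(G)|` vertices. -/
noncomputable def NM (V : Type*) [Fintype V] (G : SimpleGraph V) (ε : ℝ) : ℕ :=
  Nat.card {M : Finset (Sym2 V) // IsMaximalMatchingFinset G M ∧
    (1 - ε) * (Fintype.card V : ℝ) ≤ (coveredCard M : ℝ)}

/-- `G` is `(ε,p)`-quasirandom: any two disjoint vertex sets of size at least `ε·|V(G)|`
have edge density within `ε` of `p` (strictly). -/
def IsQuasirandom {V : Type*} [Fintype V] [DecidableEq V]
    (G : SimpleGraph V) [DecidableRel G.Adj] (ε p : ℝ) : Prop :=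
  ∀ X Y : Finset V, Disjoint X Y →
    ε * (Fintype.card V : ℝ) ≤ (X.card : ℝ) → ε * (Fintype.card V : ℝ) ≤ (Y.card : ℝ) →
    |((G.edgeDensity X Y : ℚ) : ℝ) - p| < ε


/-!
Lower bound: while a matching has fewer than `m = ⌈(1 - √ε) n / 2⌉` edges, at least `√ε n`
vertices are uncovered, and quasirandomness puts `q = (p - ε) (√ε n / 3)²` edges among them.
Double counting matchings of consecutive sizes gives at least `q ^ m / m!` matchings with `m`
edges. Each lies in a maximal matching covering `2m ≥ (1 - √ε) n` vertices, and a maximal matching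
contains at most `2 ^ n` matchings, so `NM ≥ q ^ m / (m! 2 ^ n)`.

Upper bound: a maximal matching is a set of at most `n / 2` of the at most `n²` edges, so
`NM ≤ ∑_{k ≤ n/2} C(n², k) ≤ e ^ (n / 2) (2n) ^ (n / 2)`.

Taking logarithms, the remaining errors are `O(n (1 + |log ε|))`, which a slack of `√ε n log n`
absorbs for large `n`.
-/

noncomputable section

open scoped Classical Nat

variable {V : Type*}

theorem Finset.exists_disjoint_subsets_card_ge (U : Finset V) :
    ∃ X ⊆ U, ∃ Y ⊆ U, Disjoint X Y ∧ ((#U : ℝ) - 1) / 2 ≤ #X ∧ ((#U : ℝ) - 1) / 2 ≤ #Y := by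
  obtain ⟨X, hXU, hX⟩ := exists_subset_card_eq (Nat.div_le_self #U 2)
  refine ⟨X, hXU, U \ X, sdiff_subset, disjoint_sdiff, ?_, ?_⟩
  · rw [hX]
    have : #U ≤ 2 * (#U / 2) + 1 := by omega
    have : (#U : ℝ) ≤ 2 * (#U / 2 : ℕ) + 1 := by exact_mod_cast this
    linarith
  · rw [card_sdiff_of_subset hXU, hX]
    have : #U ≤ 2 * (#U - #U / 2) := by omega
    have : (#U : ℝ) ≤ 2 * (#U - #U / 2 : ℕ) := by exact_mod_cast this
    linarith

section Covered

variable [DecidableEq V]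

def coveredVertices (M : Finset (Sym2 V)) : Finset V := M.biUnion Sym2.toFinset

theorem mem_coveredVertices {M : Finset (Sym2 V)} {v : V} :
    v ∈ coveredVertices M ↔ ∃ e ∈ M, v ∈ e := by
  simp [coveredVertices]

theorem coveredCard_eq_card_coveredVertices (M : Finset (Sym2 V)) :
    coveredCard M = #(coveredVertices M) := by
  rw [coveredCard, ← Set.ncard_coe_finset]
  congr 1
  ext v
  simp [mem_coveredVertices]

theorem coveredVertices_mono {M N : Finset (Sym2 V)} (h : M ⊆ N) :
    coveredVertices M ⊆ coveredVertices N :=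
  biUnion_subset_biUnion_of_subset_left _ h

theorem notMem_of_forall_notMem_coveredVertices {M : Finset (Sym2 V)} {e : Sym2 V}
    (hfree : ∀ v ∈ e, v ∉ coveredVertices M) : e ∉ M := fun he =>
  hfree _ (Sym2.out_fst_mem e) (mem_coveredVertices.2 ⟨e, he, Sym2.out_fst_mem e⟩)

namespace IsMatchingFinset

variable {G : SimpleGraph V} {M : Finset (Sym2 V)}

theorem card_coveredVertices (hM : IsMatchingFinset G M) :
    #(coveredVertices M) = 2 * #M := by
  rw [coveredVertices, card_biUnion, sum_const_nat, mul_comm]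
  · intro e he
    exact Sym2.card_toFinset_of_not_isDiag e (G.not_isDiag_of_mem_edgeSet (hM.1 e he))
  · intro e he f hf hef
    simp only [Function.onFun, disjoint_left, Sym2.mem_toFinset]
    exact fun v hve hvf => hM.2 e he f hf hef v ⟨hve, hvf⟩

theorem insert {e : Sym2 V} (hM : IsMatchingFinset G M) (he : e ∈ G.edgeSet)
    (hfree : ∀ v ∈ e, v ∉ coveredVertices M) : IsMatchingFinset G (insert e M) := by
  have avoid : ∀ f ∈ M, ∀ v, ¬(v ∈ e ∧ v ∈ f) := fun f hf v hv =>
    hfree v hv.1 (mem_coveredVertices.2 ⟨f, hf, hv.2⟩)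
  refine ⟨fun f hf => ?_, fun f hf g hg hfg v hv => ?_⟩
  · rcases mem_insert.1 hf with rfl | hf
    exacts [he, hM.1 f hf]
  rcases mem_insert.1 hf with rfl | hfM <;> rcases mem_insert.1 hg with rfl | hgM
  · exact hfg rfl
  · exact avoid g hgM v hv
  · exact avoid f hfM v hv.symm
  · exact hM.2 f hfM g hgM hfg v hv

end IsMatchingFinset

end Covered

variable [Fintype V]

namespace IsMatchingFinset

variable {G : SimpleGraph V} {M : Finset (Sym2 V)}

theorem two_mul_card_le (hM : IsMatchingFinset G M) : 2 * #M ≤ Fintype.card V :=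
  hM.card_coveredVertices ▸ card_le_univ _

theorem exists_maximal_superset (hM : IsMatchingFinset G M) :
    ∃ N, M ⊆ N ∧ IsMaximalMatchingFinset G N := by
  obtain ⟨N, ⟨hN, hMN⟩, hmax⟩ := (Set.toFinite {N : Finset (Sym2 V) |
    IsMatchingFinset G N ∧ M ⊆ N}).exists_maximal ⟨M, hM, subset_rfl⟩
  refine ⟨N, hMN, hN, fun e he => ?_⟩
  by_contra! hfree
  have hfree' : ∀ v ∈ e, v ∉ coveredVertices N := fun v hv hvN => by
    obtain ⟨f, hf, hvf⟩ := mem_coveredVertices.1 hvN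
    exact hfree f hf v hv hvf
  have := hmax ⟨hN.insert he hfree', hMN.trans (subset_insert e N)⟩ (subset_insert e N)
  exact notMem_of_forall_notMem_coveredVertices hfree' (this (mem_insert_self e N))

end IsMatchingFinset

def edgesWithin (G : SimpleGraph V) (U : Finset V) : Finset (Sym2 V) :=
  {e ∈ G.edgeFinset | ∀ v ∈ e, v ∈ U}

def matchingsOfCard (G : SimpleGraph V) (k : ℕ) : Finset (Finset (Sym2 V)) :=
  {M | IsMatchingFinset G M ∧ #M = k}

def nearPerfectMaximalMatchings (G : SimpleGraph V) (d : ℝ) : Finset (Finset (Sym2 V)) :=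
  {M | IsMaximalMatchingFinset G M ∧ (1 - d) * (Fintype.card V : ℝ) ≤ (coveredCard M : ℝ)}

theorem NM_eq_card_nearPerfectMaximalMatchings (G : SimpleGraph V) (d : ℝ) :
    NM V G d = #(nearPerfectMaximalMatchings G d) := by
  rw [NM, Nat.card_eq_fintype_card, nearPerfectMaximalMatchings, Fintype.card_subtype]

theorem mem_edgesWithin {G : SimpleGraph V} {U : Finset V} {e : Sym2 V} :
    e ∈ edgesWithin G U ↔ e ∈ G.edgeSet ∧ ∀ v ∈ e, v ∈ U := by
  simp [edgesWithin]

theorem mem_matchingsOfCard {G : SimpleGraph V} {k : ℕ} {M : Finset (Sym2 V)} :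
    M ∈ matchingsOfCard G k ↔ IsMatchingFinset G M ∧ #M = k := by
  simp [matchingsOfCard]

section Counting

variable {G : SimpleGraph V}

/-- Every matching with `m` edges lies in a maximal one, which is then `d`-near perfect, and a
maximal matching contains at most `2 ^ |V|` matchings. -/
theorem card_matchingsOfCard_le {d : ℝ} {m : ℕ} (hm : (1 - d) * Fintype.card V ≤ 2 * m) :
    #(matchingsOfCard G m) ≤ 2 ^ Fintype.card V * NM V G d := by
  rw [NM_eq_card_nearPerfectMaximalMatchings, mul_comm]
  have key := card_mul_le_card_mul (fun M N : Finset (Sym2 V) => M ⊆ N)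
    (s := matchingsOfCard G m) (t := nearPerfectMaximalMatchings G d) (m := 1)
    (n := 2 ^ Fintype.card V) (fun M hM => ?_) (fun N hN => ?_)
  · simpa using key
  · obtain ⟨hMatch, rfl⟩ := mem_matchingsOfCard.1 hM
    obtain ⟨N, hMN, hN⟩ := hMatch.exists_maximal_superset
    refine card_pos.2 ⟨N, (mem_bipartiteAbove _).2 ⟨?_, hMN⟩⟩
    simp only [nearPerfectMaximalMatchings, mem_filter, mem_univ, true_and]
    refine ⟨hN, hm.trans ?_⟩
    rw [coveredCard_eq_card_coveredVertices]
    exact_mod_cast hMatch.card_coveredVertices ▸ card_le_card (coveredVertices_mono hMN)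
  · have hNmax : IsMaximalMatchingFinset G N := by
      simp only [nearPerfectMaximalMatchings, mem_filter] at hN
      exact hN.2.1
    calc #((matchingsOfCard G m).bipartiteBelow (· ⊆ ·) N) ≤ #N.powerset :=
          card_le_card fun M hM => mem_powerset.2 ((mem_bipartiteBelow _).1 hM).2
      _ = 2 ^ #N := card_powerset N
      _ ≤ 2 ^ Fintype.card V := Nat.pow_le_pow_right two_pos (by
          have := hNmax.1.two_mul_card_le; omega)

variable [DecidableEq V]

theorem mem_edgesWithin_compl_coveredVertices {M : Finset (Sym2 V)} {e : Sym2 V} :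
    e ∈ edgesWithin G (coveredVertices M)ᶜ ↔
      e ∈ G.edgeSet ∧ ∀ v ∈ e, v ∉ coveredVertices M := by
  simp only [mem_edgesWithin, mem_compl]

/-- Double counting the pairs `M ⊆ M'` of matchings with `k` and `k + 1` edges: each `M` extends
by any edge avoiding its vertices, and each `M'` has `k + 1` subsets of size `k`. -/
theorem card_matchingsOfCard_mul_le {k : ℕ} {q : ℝ}
    (hq : ∀ M ∈ matchingsOfCard G k, q ≤ #(edgesWithin G (coveredVertices M)ᶜ)) :
    #(matchingsOfCard G k) * q ≤ #(matchingsOfCard G (k + 1)) * (k + 1) := by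
  have key := card_nsmul_le_card_nsmul (R := ℝ) (fun M M' : Finset (Sym2 V) => M ⊆ M')
    (s := matchingsOfCard G k) (t := matchingsOfCard G (k + 1)) (m := q) (n := k + 1)
    (fun M hM => (hq M hM).trans ?_) (fun M' hM' => ?_)
  · simpa only [nsmul_eq_mul] using key
  · obtain ⟨hMatch, rfl⟩ := mem_matchingsOfCard.1 hM
    refine Nat.cast_le.2 (card_le_card_of_injOn (fun e => insert e M) (fun e he => ?_) ?_)
    · obtain ⟨he, hfree⟩ := mem_edgesWithin_compl_coveredVertices.1 he
      rw [mem_coe, mem_bipartiteAbove, mem_matchingsOfCard]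
      exact ⟨⟨hMatch.insert he hfree, card_insert_of_notMem
        (notMem_of_forall_notMem_coveredVertices hfree)⟩, subset_insert e M⟩
    · intro e he f hf hef
      rw [mem_coe, mem_edgesWithin_compl_coveredVertices] at he
      exact (insert_inj (notMem_of_forall_notMem_coveredVertices he.2)).1 hef
  · obtain ⟨-, hcard⟩ := mem_matchingsOfCard.1 hM'
    have hsub : (matchingsOfCard G k).bipartiteBelow (· ⊆ ·) M' ⊆ M'.powersetCard k :=
      fun M hM => by
        simp only [mem_bipartiteBelow, mem_matchingsOfCard] at hM
        exact mem_powersetCard.2 ⟨hM.2, hM.1.2⟩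
    have := (card_le_card hsub).trans_eq
      (by rw [card_powersetCard, hcard, Nat.choose_succ_self_right])
    exact_mod_cast this

theorem pow_le_card_matchingsOfCard_mul_factorial {q : ℝ} (hq0 : 0 ≤ q) {m : ℕ}
    (hq : ∀ k < m, ∀ M ∈ matchingsOfCard G k, q ≤ #(edgesWithin G (coveredVertices M)ᶜ)) :
    q ^ m ≤ #(matchingsOfCard G m) * m ! := by
  induction m with
  | zero =>
    have : (∅ : Finset (Sym2 V)) ∈ matchingsOfCard G 0 :=
      mem_matchingsOfCard.2 ⟨⟨by simp, by simp⟩, card_empty⟩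
    simpa using card_pos.2 ⟨_, this⟩
  | succ m ih =>
    have hstep := card_matchingsOfCard_mul_le (hq m m.lt_succ_self)
    calc q ^ (m + 1) = q ^ m * q := pow_succ q m
      _ ≤ #(matchingsOfCard G m) * m ! * q :=
        mul_le_mul_of_nonneg_right (ih fun k hk => hq k (hk.trans m.lt_succ_self)) hq0
      _ = #(matchingsOfCard G m) * q * m ! := by ring
      _ ≤ #(matchingsOfCard G (m + 1)) * (m + 1) * m ! := by gcongr
      _ = #(matchingsOfCard G (m + 1)) * (m + 1)! := by push_cast [Nat.factorial_succ]; ring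

end Counting

theorem SimpleGraph.card_interedges_le_card_edgesWithin [DecidableEq V] {G : SimpleGraph V}
    [DecidableRel G.Adj] {X Y U : Finset V} (hX : X ⊆ U) (hY : Y ⊆ U) (hXY : Disjoint X Y) :
    #(G.interedges X Y) ≤ #(edgesWithin G U) := by
  refine card_le_card_of_injOn (fun xy => s(xy.1, xy.2)) (fun xy hxy => ?_) ?_
  · obtain ⟨hx, hy, hadj⟩ := (mem_interedges_iff G).1 hxy
    refine mem_coe.2 (mem_edgesWithin.2 ⟨hadj, fun v hv => ?_⟩)
    rcases Sym2.mem_iff.1 hv with rfl | rfl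
    exacts [hX hx, hY hy]
  · rintro ⟨x, y⟩ hxy ⟨x', y'⟩ hxy' h
    obtain ⟨hx, -, -⟩ := (mem_interedges_iff G).1 hxy
    obtain ⟨-, hy', -⟩ := (mem_interedges_iff G).1 hxy'
    rcases Sym2.eq_iff.1 h with ⟨rfl, rfl⟩ | ⟨rfl, -⟩
    · rfl
    · exact absurd hy' (Finset.disjoint_left.1 hXY hx)

namespace IsQuasirandom

variable [DecidableEq V] {G : SimpleGraph V} [DecidableRel G.Adj] {ε p : ℝ}

theorem mul_card_mul_card_le_card_interedges (hq : IsQuasirandom G ε p) {X Y : Finset V}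
    (hXY : Disjoint X Y) (hX : ε * Fintype.card V ≤ #X) (hY : ε * Fintype.card V ≤ #Y) :
    (p - ε) * (#X * #Y) ≤ #(G.interedges X Y) := by
  have hdens := (abs_lt.1 (hq X Y hXY hX hY)).1
  rcases eq_or_ne ((#X : ℝ) * #Y) 0 with h0 | h0
  · simp [h0]
  have hcard : (#(G.interedges X Y) : ℝ) = (G.edgeDensity X Y : ℝ) * (#X * #Y) := by
    rw [SimpleGraph.edgeDensity_def]
    push_cast
    rw [div_mul_cancel₀ _ h0]
  rw [hcard]
  exact mul_le_mul_of_nonneg_right (by linarith) (by positivity)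

theorem neg_lt (hq : IsQuasirandom G ε p)
    (hn : ε * Fintype.card V ≤ ((Fintype.card V : ℝ) - 1) / 2) : -ε < p := by
  obtain ⟨X, -, Y, -, hXY, hX, hY⟩ := (univ : Finset V).exists_disjoint_subsets_card_ge
  rw [card_univ] at hX hY
  have hdens := (abs_lt.1 (hq X Y hXY (hn.trans hX) (hn.trans hY))).2
  have : (0 : ℝ) ≤ (G.edgeDensity X Y : ℝ) := by exact_mod_cast G.edgeDensity_nonneg X Y
  linarith

theorem mul_sq_le_card_edgesWithin (hq : IsQuasirandom G ε p) (hε : 0 ≤ ε) (hεp : ε ≤ p)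
    {U : Finset V} (hU : ε * Fintype.card V ≤ ((#U : ℝ) - 1) / 2) :
    (p - ε) * (((#U : ℝ) - 1) / 2) ^ 2 ≤ #(edgesWithin G U) := by
  obtain ⟨X, hXU, Y, hYU, hXY, hX, hY⟩ := U.exists_disjoint_subsets_card_ge
  calc (p - ε) * (((#U : ℝ) - 1) / 2) ^ 2 ≤ (p - ε) * (#X * #Y) := by
        rw [sq]
        exact mul_le_mul_of_nonneg_left
          (mul_le_mul hX hY (hU.trans' (by positivity)) (by positivity)) (by linarith)
    _ ≤ #(G.interedges X Y) :=
        hq.mul_card_mul_card_le_card_interedges hXY (hU.trans hX) (hU.trans hY)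
    _ ≤ #(edgesWithin G U) := by
        exact_mod_cast G.card_interedges_le_card_edgesWithin hXU hYU hXY

theorem pow_le_NM_mul_factorial_mul_two_pow (hq : IsQuasirandom G ε p)
    (hε : 0 ≤ ε) (hεp : ε ≤ p) {δ : ℝ} (hεδ : 3 * ε ≤ δ) (hδn : 3 ≤ δ * Fintype.card V)
    {m : ℕ} (hm : (1 - δ) * Fintype.card V ≤ 2 * m)
    (hm' : 2 * m < (1 - δ) * Fintype.card V + 2) :
    ((p - ε) * (δ * Fintype.card V / 3) ^ 2) ^ m ≤ NM V G δ * m ! * 2 ^ Fintype.card V := by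
  set n : ℝ := (Fintype.card V : ℝ)
  have hext : ∀ k < m, ∀ M ∈ matchingsOfCard G k,
      (p - ε) * (δ * n / 3) ^ 2 ≤ #(edgesWithin G (coveredVertices M)ᶜ) := by
    intro k hk M hM
    obtain ⟨hMatch, rfl⟩ := mem_matchingsOfCard.1 hM
    have hfree : (#(coveredVertices M)ᶜ : ℝ) = n - 2 * #M := by
      rw [card_compl, hMatch.card_coveredVertices, Nat.cast_sub hMatch.two_mul_card_le]
      push_cast
      ring
    have hkm : (#M : ℝ) + 1 ≤ m := by exact_mod_cast hk
    have hbig : δ * n / 3 ≤ ((#(coveredVertices M)ᶜ : ℝ) - 1) / 2 := by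
      rw [hfree]
      linarith
    calc (p - ε) * (δ * n / 3) ^ 2
        ≤ (p - ε) * (((#(coveredVertices M)ᶜ : ℝ) - 1) / 2) ^ 2 :=
          mul_le_mul_of_nonneg_left (pow_le_pow_left₀ (by positivity) hbig 2) (by linarith)
      _ ≤ _ := hq.mul_sq_le_card_edgesWithin hε hεp (hbig.trans' (by nlinarith))
  calc ((p - ε) * (δ * n / 3) ^ 2) ^ m ≤ #(matchingsOfCard G m) * m ! :=
        pow_le_card_matchingsOfCard_mul_factorial
          (mul_nonneg (by linarith) (by positivity)) hext
    _ ≤ (2 ^ Fintype.card V * NM V G δ : ℕ) * m ! := by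
        gcongr
        exact card_matchingsOfCard_le hm
    _ = NM V G δ * m ! * 2 ^ Fintype.card V := by push_cast; ring

end IsQuasirandom

theorem mul_log_le_log_of_pow_le {c δ x : ℝ} {m N : ℕ} (hc : 0 < c) (hδ : 0 ≤ δ)
    (hδ1 : δ ≤ 1) (hN : 1 ≤ N) (hm : (1 - δ) * N ≤ 2 * m) (hmN : m ≤ N)
    (hlog : Real.log 4 + |Real.log c| ≤ δ * Real.log N)
    (h : (c * N ^ 2) ^ m ≤ x * m ! * 2 ^ N) :
    (1 - 3 * δ) * (N / 2) * Real.log N ≤ Real.log x := by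
  have hN0 : (0 : ℝ) < N := by exact_mod_cast hN
  have hlogN : 0 ≤ Real.log N := Real.log_natCast_nonneg N
  have hx : 0 < x := by
    have : 0 < x * m ! * 2 ^ N := (pow_pos (by positivity) m).trans_le h
    have : (0 : ℝ) < m ! * 2 ^ N := by positivity
    nlinarith
  have hlogh : m * (Real.log c + 2 * Real.log N) ≤
      Real.log x + Real.log m ! + N * Real.log 2 := by
    have := Real.log_le_log (by positivity) h
    rwa [Real.log_pow, Real.log_mul (by positivity) (by positivity), Real.log_pow,
      Real.log_mul (by positivity) (by positivity), Real.log_mul (by positivity) (by positivity),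
      Real.log_pow] at this
  have hfact : Real.log m ! ≤ m * Real.log N := by
    rw [← Real.log_pow]
    refine Real.log_le_log (by positivity) ?_
    exact_mod_cast (Nat.factorial_le_pow m).trans (Nat.pow_le_pow_left hmN m)
  have hlog4 : Real.log 4 = 2 * Real.log 2 := by
    rw [show (4 : ℝ) = 2 ^ 2 by norm_num, Real.log_pow]; push_cast; ring
  have hlog2 : 0 < Real.log 2 := Real.log_pos one_lt_two
  have habs := neg_abs_le (Real.log c)
  have hδlogN : δ * Real.log N ≤ Real.log N := mul_le_of_le_one_left hlogN hδ1
  have hgain : 0 ≤ Real.log c + Real.log N := by linarith [abs_nonneg (Real.log c)]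
  have hmgain : (1 - δ) * N / 2 * (Real.log c + Real.log N) ≤ m * (Real.log c + Real.log N) :=
    mul_le_mul_of_nonneg_right (by linarith) hgain
  have hslack : 0 ≤ N / 2 * (2 * (δ * Real.log N) + (1 - δ) * Real.log c - 2 * Real.log 2) := by
    have : -|Real.log c| ≤ (1 - δ) * Real.log c := by nlinarith [abs_nonneg (Real.log c)]
    exact mul_nonneg (by positivity) (by linarith [abs_nonneg (Real.log c)])
  linear_combination hlogh + hfact + hmgain + hslack

theorem IsQuasirandom.mul_log_le_log_NM [DecidableEq V] {G : SimpleGraph V}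
    [DecidableRel G.Adj] {ε p : ℝ} (hq : IsQuasirandom G ε p) (hε : 0 < ε) (hεp : ε < p ^ 2)
    (hp : p ^ 2 ≤ 1) (hn : 3 ≤ √ε * Fintype.card V)
    (hlog : Real.log 4 + |Real.log ((p - ε) * (√ε / 3) ^ 2)| ≤ √ε * Real.log (Fintype.card V)) :
    (1 - 3 * √ε) * ((Fintype.card V : ℝ) / 2) * Real.log (p * Fintype.card V) ≤
      Real.log (NM V G √ε) := by
  set δ := √ε
  set n : ℝ := (Fintype.card V : ℝ)
  have hδ0 : 0 < δ := Real.sqrt_pos.2 hε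
  have hεδ : δ ^ 2 = ε := Real.sq_sqrt hε.le
  have hδp : δ < |p| := by rw [← Real.sqrt_sq_eq_abs]; exact Real.sqrt_lt_sqrt hε.le hεp
  have hp1 : |p| ≤ 1 := (sq_le_one_iff_abs_le_one p).1 hp
  have hn0 : 0 < n := by nlinarith
  have hlogpn : 0 ≤ Real.log (p * n) := by
    rw [← Real.log_abs, abs_mul, abs_of_pos hn0]
    exact Real.log_nonneg (by nlinarith)
  rcases lt_or_ge 1 (3 * δ) with h3δ | h3δ
  · exact (mul_nonpos_of_nonpos_of_nonneg (mul_nonpos_of_nonpos_of_nonneg (by linarith)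
      (by positivity)) hlogpn).trans (Real.log_natCast_nonneg _)
  have hpos : 0 < p := by
    have := hq.neg_lt (by nlinarith)
    rcases le_or_gt p 0 with hp0 | hp0
    · rw [abs_of_nonpos hp0] at hδp; nlinarith
    · exact hp0
  rw [abs_of_pos hpos] at hδp hp1
  set m := ⌈(1 - δ) * n / 2⌉₊
  have hm : (1 - δ) * n ≤ 2 * m := by linarith [Nat.le_ceil ((1 - δ) * n / 2)]
  have hm' : 2 * m < (1 - δ) * n + 2 := by
    linarith [Nat.ceil_lt_add_one (show 0 ≤ (1 - δ) * n / 2 by nlinarith)]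
  have hmN : m ≤ Fintype.card V := Nat.cast_le.1 (show (m : ℝ) ≤ n by nlinarith)
  have hcount :=
    hq.pow_le_NM_mul_factorial_mul_two_pow hε.le (by nlinarith) (by nlinarith) hn hm hm'
  rw [show (p - ε) * (δ * n / 3) ^ 2 = (p - ε) * (δ / 3) ^ 2 * n ^ 2 by ring] at hcount
  have hc : 0 < (p - ε) * (δ / 3) ^ 2 := mul_pos (by nlinarith) (by positivity)
  have hlower := mul_log_le_log_of_pow_le hc hδ0.le (by linarith) (Nat.cast_pos.1 hn0) hm hmN
    hlog hcount
  calc (1 - 3 * δ) * (n / 2) * Real.log (p * n)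
      = (1 - 3 * δ) * (n / 2) * (Real.log p + Real.log n) := by
        rw [Real.log_mul hpos.ne' hn0.ne']
    _ ≤ (1 - 3 * δ) * (n / 2) * Real.log n := by
        gcongr
        linarith [Real.log_nonpos hpos.le hp1]
    _ ≤ Real.log (NM V G δ) := hlower

theorem sum_range_choose_le_exp_mul_pow (N K : ℕ) {t : ℝ} (ht : 0 < t) (htN : t ≤ N) :
    ∑ k ∈ range (K + 1), (N.choose k : ℝ) ≤ Real.exp t * (N / t) ^ K := by
  have hNt : 1 ≤ N / t := (one_le_div ht).2 htN
  calc ∑ k ∈ range (K + 1), (N.choose k : ℝ)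
      ≤ ∑ k ∈ range (K + 1), t ^ k / k ! * (N / t) ^ K := by
        refine sum_le_sum fun k hk => (Nat.choose_le_pow_div k N).trans ?_
        calc (N : ℝ) ^ k / k ! = t ^ k / k ! * (N / t) ^ k := by
              rw [div_mul_eq_mul_div, ← mul_pow, mul_div_cancel₀ _ ht.ne']
          _ ≤ t ^ k / k ! * (N / t) ^ K :=
              mul_le_mul_of_nonneg_left (pow_le_pow_right₀ hNt (mem_range_succ_iff.1 hk))
                (by positivity)
    _ = (∑ k ∈ range (K + 1), t ^ k / k !) * (N / t) ^ K := (sum_mul ..).symm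
    _ ≤ Real.exp t * (N / t) ^ K := by gcongr; exact Real.sum_le_exp_of_nonneg ht.le _

theorem NM_le_sum_choose (G : SimpleGraph V) (d : ℝ) :
    NM V G d ≤ ∑ k ∈ range (Fintype.card V / 2 + 1), (Fintype.card V ^ 2).choose k := by
  rw [NM_eq_card_nearPerfectMaximalMatchings]
  calc #(nearPerfectMaximalMatchings G d)
      ≤ #((range (Fintype.card V / 2 + 1)).biUnion G.edgeFinset.powersetCard) := by
        refine card_le_card fun M hM => ?_
        simp only [nearPerfectMaximalMatchings, mem_filter, mem_univ, true_and] at hM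
        have := hM.1.1.two_mul_card_le
        refine mem_biUnion.2 ⟨#M, mem_range.2 (by omega), mem_powersetCard.2 ⟨fun e he => ?_, rfl⟩⟩
        exact G.mem_edgeFinset.2 (hM.1.1.1 e he)
    _ ≤ ∑ k ∈ range (Fintype.card V / 2 + 1), #(G.edgeFinset.powersetCard k) := card_biUnion_le
    _ ≤ _ := by
        refine sum_le_sum fun k _ => ?_
        rw [card_powersetCard]
        exact Nat.choose_le_choose k (G.card_edgeFinset_le_card_choose_two.trans
          (Nat.choose_le_pow _ _))

theorem log_NM_le [Nonempty V] (G : SimpleGraph V) (d : ℝ) :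
    Real.log (NM V G d) ≤ (Fintype.card V : ℝ) / 2 * (1 + Real.log (2 * Fintype.card V)) := by
  set n : ℝ := (Fintype.card V : ℝ)
  have hn : 1 ≤ n := Nat.one_le_cast.2 Fintype.card_pos
  have hlog2n : 0 ≤ Real.log (2 * n) := Real.log_nonneg (by linarith)
  rcases (NM V G d).eq_zero_or_pos with h0 | hpos
  · rw [h0, Nat.cast_zero, Real.log_zero]
    positivity
  have hK : ((Fintype.card V / 2 : ℕ) : ℝ) ≤ n / 2 := Nat.cast_div_le
  have hbound : (NM V G d : ℝ) ≤ Real.exp (n / 2) * (2 * n) ^ (Fintype.card V / 2) := by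
    have := sum_range_choose_le_exp_mul_pow (Fintype.card V ^ 2) (Fintype.card V / 2)
      (t := n / 2) (by positivity) (by push_cast; nlinarith)
    rw [show ((Fintype.card V ^ 2 : ℕ) : ℝ) / (n / 2) = 2 * n by
      push_cast; field_simp; rfl] at this
    exact le_trans (by exact_mod_cast NM_le_sum_choose G d) this
  calc Real.log (NM V G d)
      ≤ Real.log (Real.exp (n / 2) * (2 * n) ^ (Fintype.card V / 2)) :=
        Real.log_le_log (by exact_mod_cast hpos) hbound
    _ = n / 2 + (Fintype.card V / 2 : ℕ) * Real.log (2 * n) := by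
        rw [Real.log_mul (by positivity) (by positivity), Real.log_exp, Real.log_pow]
    _ ≤ n / 2 * (1 + Real.log (2 * n)) := by nlinarith

theorem log_NM_le_mul_log (G : SimpleGraph V) {ε p : ℝ} (hε : 0 < ε) (hεp : ε < p ^ 2)
    (hp : p ^ 2 ≤ 1)
    (hlog : 1 + Real.log 2 - 4 * Real.log √ε ≤ 3 * √ε * Real.log (Fintype.card V)) :
    Real.log (NM V G √ε) ≤
      (1 + 3 * √ε) * ((Fintype.card V : ℝ) / 2) * Real.log (p * Fintype.card V) := by
  set δ := √ε
  set n : ℝ := (Fintype.card V : ℝ)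
  have hδ0 : 0 < δ := Real.sqrt_pos.2 hε
  have hδp : δ < |p| := by rw [← Real.sqrt_sq_eq_abs]; exact Real.sqrt_lt_sqrt hε.le hεp
  have hp1 : |p| ≤ 1 := (sq_le_one_iff_abs_le_one p).1 hp
  have hlogδ : Real.log δ ≤ 0 := Real.log_nonpos hδ0.le (by linarith)
  have hlog2 : 0 < Real.log 2 := Real.log_pos one_lt_two
  have : Nonempty V := by
    rw [← Fintype.card_pos_iff]
    refine Nat.pos_of_ne_zero fun h => ?_
    simp only [n, h, CharP.cast_eq_zero, Real.log_zero, mul_zero] at hlog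
    linarith
  have hlogp : Real.log δ ≤ Real.log |p| := Real.log_le_log hδ0 hδp.le
  calc Real.log (NM V G δ) ≤ n / 2 * (1 + Real.log (2 * n)) := log_NM_le G δ
    _ = n / 2 * (1 + Real.log 2 + Real.log n) := by
        rw [Real.log_mul two_ne_zero (by positivity), add_assoc]
    _ ≤ n / 2 * ((1 + 3 * δ) * (Real.log |p| + Real.log n)) := by
        gcongr
        nlinarith
    _ = (1 + 3 * δ) * (n / 2) * Real.log (p * n) := by
        rw [Real.log_mul (abs_pos.1 (hδ0.trans hδp)) (by positivity), Real.log_abs]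
        ring

theorem eventually_le_mul_log_natCast {δ : ℝ} (hδ : 0 < δ) (C : ℝ) :
    ∀ᶠ N : ℕ in Filter.atTop, C ≤ δ * Real.log N :=
  ((Real.tendsto_log_atTop.comp tendsto_natCast_atTop_atTop).const_mul_atTop hδ)
    |>.eventually_ge_atTop C

end

/-- For all `0 < ε < p² ≤ 1` there is `n₀` such that every `(ε,p)`-quasirandom
graph `G` on `n > n₀` vertices satisfies
`(1-3√ε)·(n/2)·log(pn) ≤ log NM(G,√ε) ≤ (1+3√ε)·(n/2)·log(pn)`. -/
theorem count_near_perfect_matchings_quasirandom :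
    ∀ ε p : ℝ, 0 < ε → ε < p ^ 2 → p ^ 2 ≤ 1 →
    ∃ n₀ : ℕ, ∀ (V : Type) [Fintype V] [DecidableEq V]
      (G : SimpleGraph V) [DecidableRel G.Adj],
      Fintype.card V > n₀ →
      IsQuasirandom G ε p →
      (1 - 3 * Real.sqrt ε) * ((Fintype.card V : ℝ) / 2) *
          Real.log (p * (Fintype.card V : ℝ)) ≤ Real.log (NM V G (Real.sqrt ε)) ∧
        Real.log (NM V G (Real.sqrt ε)) ≤
          (1 + 3 * Real.sqrt ε) * ((Fintype.card V : ℝ) / 2) *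
            Real.log (p * (Fintype.card V : ℝ)) := by
  intro ε p hε hεp hp
  have hδ : 0 < √ε := Real.sqrt_pos.2 hε
  obtain ⟨n₀, hn₀⟩ := Filter.eventually_atTop.1 <|
    ((tendsto_natCast_atTop_atTop.const_mul_atTop hδ).eventually_ge_atTop 3).and <|
      (eventually_le_mul_log_natCast hδ (Real.log 4 + |Real.log ((p - ε) * (√ε / 3) ^ 2)|)).and
      (eventually_le_mul_log_natCast (mul_pos three_pos hδ) (1 + Real.log 2 - 4 * Real.log √ε))
  refine ⟨n₀, fun V _ _ G _ hV hq => ?_⟩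
  obtain ⟨hn, hlower, hupper⟩ := hn₀ _ hV.le
  exact ⟨hq.mul_log_le_log_NM hε hεp hp hn hlower, log_NM_le_mul_log G hε hεp hp hupper⟩
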